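/- arXiv:2403.19804 — 6 statements merged into one kernel-verified Lean document; each statement's English description precedes it below -/
import Mathlib

section
/- The set {L^P_{j,k} : (j,k) ∈ JK} of linear polynomials is linearly independent over ℂ in R. -/
open scoped Classical

noncomputable section

/-- The type of indeterminates: `Sum.inl (a,b)` is `x(a,b)`, `Sum.inr (a,b)` is `y(a,b)`. -/
abbrev KVar : Type := (ℕ × ℕ) ⊕ (ℕ × ℕ)

/-- The polynomial ring `R = ℂ[x(a,b), y(a,b)]`. -/
abbrev KR : Type := MvPolynomial KVar ℂ

/-- The indeterminate `x(a,b)`. -/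
noncomputable def Xv (a b : ℕ) : KR := MvPolynomial.X (Sum.inl (a, b))

/-- The indeterminate `y(a,b)`. -/
noncomputable def Yv (a b : ℕ) : KR := MvPolynomial.X (Sum.inr (a, b))

/-- `B(P) = ∪_{j=1}^n [i_{2j-1}+1, i_{2j}]`. -/
def Bfin (n : ℕ) (i : ℕ → ℕ) : Finset ℕ :=
  (Finset.Icc 1 n).biUnion fun j => Finset.Icc (i (2*j-1) + 1) (i (2*j))

/-- The set of indices `j ∈ [1,n]` with `i_{2j} = i_{2j-1}` (indexing `A(P)`). -/
def Apairs (n : ℕ) (i : ℕ → ℕ) : Finset ℕ :=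
  (Finset.Icc 1 n).filter fun j => i (2*j) = i (2*j-1)

/-- `A(P) = {i_{2j} : j ∈ [1,n], i_{2j} = i_{2j-1}}`. -/
def Aval (n : ℕ) (i : ℕ → ℕ) : Finset ℕ := (Apairs n i).image fun j => i (2*j)

/-- `e_2(P)`. -/
def e2P (n : ℕ) (i : ℕ → ℕ) : ℕ := ∑ j ∈ Finset.Icc 1 n, (i (2*j) - i (2*j-1))

/-- `e_1(P)`. -/
def e1P (n : ℕ) (i : ℕ → ℕ) : ℕ := n + e2P n i

/-- The entry of the matrix `N²(P)` in row labelled `a` and column labelled `b`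
(labels run from `1` to `m-3`). -/
def N2e (m n : ℕ) (i : ℕ → ℕ) (a b : ℕ) : KR :=
  if a ∈ Bfin n i ∧ 1 ≤ b ∧ b ≤ m - 3 then
    (if b = a then 1
     else if b ∉ Bfin n i ∧ a < b then Xv a b else 0)
  else 0

/-- The entry of the row of `S′(P)` indexed by `j ∈ Apairs` in column `b ∈ [1, m-2]`. -/
def sprimeEnt (m n : ℕ) (i : ℕ → ℕ) (j b : ℕ) : KR :=
  if j ∈ Apairs n i then
    (if b = i (2*j) + 1 then 1
     else if i (2*j) + 2 ≤ b ∧ b ≤ m - 2 ∧ b ∉ Aval n i ∪ Bfin n i then Yv (i (2*j) + 1) b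
     else 0)
  else 0

/-- The entry of `N¹(P)` (equivalently of `N_1(P)`): row labels are encoded as natural
numbers, a row `ā` of `N̄(P)` being encoded as `a`, a row `a̲` of `N̲(P)` as `m + a`, and the
row of `S′(P)` corresponding to the pair indexed by `j` as `2m + j`.  Column labels run
from `1` to `m-2`. -/
def N1e (m n : ℕ) (i : ℕ → ℕ) (r b : ℕ) : KR :=
  if r ≤ m then N2e m n i r b
  else if r ≤ 2*m then N2e m n i (r - m) (b - 1)
  else sprimeEnt m n i (r - 2*m) b

/-- The (encoded) labels of the rows of `N_1(P)`, i.e. of the nonzero rows of `N¹(P)`. -/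
def rowsFS (m n : ℕ) (i : ℕ → ℕ) : Finset ℕ :=
  Bfin n i ∪ (Bfin n i).image (fun a => m + a) ∪ (Apairs n i).image (fun j => 2*m + j)

/-- The column labels of `N_1(P)`. -/
def colsFS (m : ℕ) : Finset ℕ := Finset.Icc 1 (m - 2)

/-- `|L^P(j,k)|`, given the block indices `ν, μ`. -/
def numL (n : ℕ) (i : ℕ → ℕ) (ν μ j k : ℕ) : ℕ :=
  if k = i (2*n+1) ∧ i (2*n) + 1 < i (2*n+1) ∧ j = i (2*ν-1) + 1 then 1
  else if k = i (2*n+1) ∧ i (2*n) + 1 = i (2*n+1) then 1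
  else if j < i (2*ν) ∧ k < i (2*μ+1) then 2
  else 0

/-- `φ_η^{(j,k)}` on an (unframed) tuple whose last index is `α`, with last entry `mcur`
and next-to-last entry `mprev`. -/
def phiT (i : ℕ → ℕ) (η k : ℕ) (α mcur mprev : ℕ) : KR :=
  if α = 0 then 1
  else if α = 1 then (if η = 1 then Xv (i (2*mcur)) k else Xv (i (2*mcur+1) + 1) (k+1))
  else if α % 2 = 0 then
    (if η = 1 then Xv (i (2*mcur+1) + 1) (i (2*mprev) + 1) else Xv (i (2*mcur)) (i (2*mprev+1)))
  else
    (if η = 1 then Xv (i (2*mcur)) (i (2*mprev+1)) else Xv (i (2*mcur) + 1) (i (2*mprev)))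

/-- `φ_η^{(j,k)}` on a framed tuple whose last (unframed) index is `α`, with last entry `mcur`. -/
def phiF (i : ℕ → ℕ) (η j k : ℕ) (α mcur : ℕ) : KR :=
  if α = 0 then (if η = 1 then Xv j k else Xv (j+1) (k+1))
  else if α % 2 = 0 then (if η = 1 then Xv j (i (2*mcur+1)) else Xv (j+1) (i (2*mcur) + 1))
  else (if η = 1 then Xv (j+1) (i (2*mcur) + 1) else Xv j (i (2*mcur+1)))

/-- Membership condition for the Fibonacci tree `F_η^{(ν,μ)}`, for a tuple
`(g 0, g 1, …, g β)`. -/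
def tupCond (η ν μ β : ℕ) (g : ℕ → ℕ) : Prop :=
  g 0 = μ ∧ (∀ t ≤ β, ν ≤ g t ∧ g t ≤ μ) ∧
  (if η = 1 then
     ∀ t, 1 ≤ t → (2*t ≤ β → g (2*t) < g (2*t-1)) ∧ (2*t+1 ≤ β → g (2*t+1) ≤ g (2*t))
   else
     ∀ t, 1 ≤ t → (2*t-1 ≤ β → g (2*t-1) < g (2*t-2)) ∧ (2*t ≤ β → g (2*t) ≤ g (2*t-1)))

/-- The polynomial `D^P_{j,k}`, for the tuple `P` encoded by `(n, i)` and with the block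
indices `ν, μ` given.  (Any tuple in `F_η^{(ν,μ)}` has `β ≤ 2(μ-ν)+3`, so the sum below
ranges over all of `F_η^{(ν,μ)}`.) -/
def Dcore (n : ℕ) (i : ℕ → ℕ) (ν μ j k : ℕ) : KR :=
  ∑ η ∈ Finset.Icc 1 (numL n i ν μ j k), (-1 : KR)^(η-1) *
    ∑ β ∈ Finset.range (2*(μ - ν) + 4),
      ∑ g ∈ Finset.univ.filter (fun g : Fin (β+1) → Fin (μ+1) =>
          tupCond η ν μ β (fun t => if h : t < β+1 then (g ⟨t, h⟩ : ℕ) else 0)),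
        phiF i η j k β ((fun t => if h : t < β+1 then ((g ⟨t, h⟩ : Fin (μ+1)) : ℕ) else 0) β) *
        ∏ l ∈ Finset.range (β+1),
          phiT i η k l ((fun t => if h : t < β+1 then ((g ⟨t, h⟩ : Fin (μ+1)) : ℕ) else 0) l)
                       ((fun t => if h : t < β+1 then ((g ⟨t, h⟩ : Fin (μ+1)) : ℕ) else 0) (l-1))

/-- The blocks (if any) of the row label `j`. -/
def nuSet (n : ℕ) (i : ℕ → ℕ) (j : ℕ) : Finset ℕ :=
  (Finset.Icc 1 n).filter fun ν => i (2*ν-1) + 1 ≤ j ∧ j ≤ i (2*ν)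

/-- The blocks (if any) of the column label `k`. -/
def muSet (n : ℕ) (i : ℕ → ℕ) (k : ℕ) : Finset ℕ :=
  (Finset.Icc 1 n).filter fun μ => i (2*μ) + 1 ≤ k ∧ k ≤ i (2*μ+1)

/-- `D^P_{j,k}` with the block indices `ν, μ` computed from `j, k`; it is `0` when `(j,k)`
is not in the admissible range. -/
def Dfull (n : ℕ) (i : ℕ → ℕ) (j k : ℕ) : KR :=
  if (nuSet n i j).Nonempty ∧ (muSet n i k).Nonempty ∧
      (nuSet n i j).sup id ≤ (muSet n i k).sup id then
    Dcore n i ((nuSet n i j).sup id) ((muSet n i k).sup id) j k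
  else 0

/-- The indices of the pairs of `P` surviving in `P′`, in increasing order. -/
def survivors (n : ℕ) (i : ℕ → ℕ) : List ℕ :=
  ((Finset.Icc 1 n).filter fun j => i (2*j) ≠ i (2*j-1)).sort (· ≤ ·)

/-- The number of pairs of `P′`. -/
def nP' (n : ℕ) (i : ℕ → ℕ) : ℕ := (survivors n i).length

/-- The tuple `P′` (with the same conventions at indices `0` and `2n′+1`). -/
def iP' (m n : ℕ) (i : ℕ → ℕ) : ℕ → ℕ := fun t =>
  if t = 0 then 0
  else if t ≤ 2 * nP' n i then
    (if t % 2 = 1 then i (2 * ((survivors n i).getD ((t+1)/2 - 1) 0) - 1)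
     else i (2 * ((survivors n i).getD (t/2 - 1) 0)))
  else m - 3

/-- The polynomial `D̂^P_{j,k}`. -/
def Dhat (m n : ℕ) (i : ℕ → ℕ) (j k : ℕ) : KR :=
  if Apairs n i = ∅ then Dfull n i j k
  else Dfull (nP' n i) (iP' m n i) j k -
    ∑ b ∈ Apairs n i, Yv (i (2*b) + 1) (k + 1) * Dfull (nP' n i) (iP' m n i) j (i (2*b))

/-- The linear part `L^P_{j,k}`, given the block indices `ν, μ`. -/
def Lpoly (n : ℕ) (i : ℕ → ℕ) (ν μ j k : ℕ) : KR :=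
  if numL n i ν μ j k = 0 then 0
  else if numL n i ν μ j k = 1 then Xv j k
  else Xv j k - Xv (j+1) (k+1)

/-- The linear part `L^P_{j,k}`, with `ν, μ` computed from `j, k`. -/
def LpolyFull (n : ℕ) (i : ℕ → ℕ) (j k : ℕ) : KR :=
  Lpoly n i ((nuSet n i j).sup id) ((muSet n i k).sup id) j k

/-- The set `JK`. -/
def JKfin (m n : ℕ) (i : ℕ → ℕ) : Finset (ℕ × ℕ) :=
  ((Finset.Icc 1 (m-3)) ×ˢ (Finset.Icc 1 (m-3))).filter fun p =>
    ∃ ν ∈ Finset.Icc 1 n, ∃ μ ∈ Finset.Icc 1 n, ν ≤ μ ∧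
      i (2*ν-1) + 1 ≤ p.1 ∧ p.1 ≤ i (2*ν) ∧
      i (2*μ) + 1 ≤ p.2 ∧ p.2 ≤ i (2*μ+1) ∧
      numL n i ν μ p.1 p.2 ≠ 0 ∧ p.2 ∉ Aval n i

/-- The set of `(e_1(P)+1) × (e_1(P)+1)` minors of `N_1(P)`. -/
def minorSet (m n : ℕ) (i : ℕ → ℕ) : Set KR :=
  { d | ∃ rsel : Fin (e1P n i + 1) → ℕ, ∃ csel : Fin (e1P n i + 1) → ℕ,
      Function.Injective rsel ∧ Function.Injective csel ∧
      (∀ p, rsel p ∈ rowsFS m n i) ∧ (∀ p, csel p ∈ colsFS m) ∧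
      d = Matrix.det (Matrix.of fun p q : Fin (e1P n i + 1) =>
            N1e m n i (rsel p) (csel q)) }

/-- The ideal `J(P)` generated by the `(e_1(P)+1) × (e_1(P)+1)` minors of `N_1(P)`. -/
def Jideal (m n : ℕ) (i : ℕ → ℕ) : Ideal KR := Ideal.span (minorSet m n i)

/-- The ideal `K(P)` generated by the `D̂^P_{j,k}`, `(j,k) ∈ JK`. -/
def Kideal (m n : ℕ) (i : ℕ → ℕ) : Ideal KR :=
  Ideal.span { d | ∃ p ∈ JKfin m n i, d = Dhat m n i p.1 p.2 }

/-- The (encoded) labels of the rows removed from `N_1(P)` to form `A^P_{j,k}`. -/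
def rowRem (m n : ℕ) (i : ℕ → ℕ) (j : ℕ) : Finset ℕ :=
  (((Finset.Icc 1 n).biUnion fun β => Finset.Icc (i (2*β-1) + 1) (i (2*β) - 1)).image
      fun a => m + a) \ {m + j}

/-- The labels of the columns removed from `N_1(P)` to form `A^P_{j,k}`. -/
def colRem (m n : ℕ) (i : ℕ → ℕ) (k : ℕ) : Finset ℕ :=
  (((Finset.Icc 1 n).biUnion fun β => Finset.Icc (i (2*β) + 2) (i (2*β+1))) ∪ {m - 2}) \ {k + 1}

/-- The (encoded) labels of the rows of `A^P_{j,k}`. -/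
def keptRows (m n : ℕ) (i : ℕ → ℕ) (j : ℕ) : Finset ℕ := rowsFS m n i \ rowRem m n i j

/-- The labels of the columns of `A^P_{j,k}`. -/
def keptCols (m n : ℕ) (i : ℕ → ℕ) (k : ℕ) : Finset ℕ := colsFS m \ colRem m n i k

/-- The set of variables occurring in `N_1(P)`. -/
def Wfin (m n : ℕ) (i : ℕ → ℕ) : Finset KVar :=
  (rowsFS m n i).biUnion fun r => (colsFS m).biUnion fun b => (N1e m n i r b).vars



lemma aux_imono (n : ℕ) (i : ℕ → ℕ)
    (hle : ∀ t, 1 ≤ t → t ≤ n → i (2*t-1) ≤ i (2*t))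
    (hlt : ∀ t, 1 ≤ t → t < n → i (2*t) < i (2*t+1)) :
    ∀ s t, 1 ≤ s → s ≤ t → t ≤ 2*n → i s ≤ i t := by
  intro s t hs hst htn
  induction t with
  | zero => omega
  | succ t ih =>
    rcases Nat.lt_or_ge s (t+1) with h | h
    · have h1 : i s ≤ i t := ih (by omega) (by omega)
      have h2 : i t ≤ i (t+1) := by
        rcases Nat.even_or_odd t with ⟨a, ha⟩ | ⟨a, ha⟩
        · have : i (2*a) < i (2*a+1) := hlt a (by omega) (by omega)
          have e1 : 2*a = t := by omega
          rw [e1] at this; omega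
        · have : i (2*(a+1)-1) ≤ i (2*(a+1)) := hle (a+1) (by omega) (by omega)
          have e1 : 2*(a+1)-1 = t := by omega
          have e2 : 2*(a+1) = t+1 := by omega
          rw [e1, e2] at this; exact this
      omega
    · have : s = t+1 := by omega
      subst this; exact le_rfl

lemma aux_nuSet_sup (n : ℕ) (i : ℕ → ℕ)
    (hle : ∀ t, 1 ≤ t → t ≤ n → i (2*t-1) ≤ i (2*t))
    (hlt : ∀ t, 1 ≤ t → t < n → i (2*t) < i (2*t+1))
    {ν j : ℕ} (h1 : 1 ≤ ν) (h2 : ν ≤ n) (h3 : i (2*ν-1) + 1 ≤ j) (h4 : j ≤ i (2*ν)) :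
    (nuSet n i j).sup id = ν := by
  have hset : nuSet n i j = {ν} := by
    rw [Finset.eq_singleton_iff_unique_mem]
    constructor
    · simp only [nuSet, Finset.mem_filter, Finset.mem_Icc]
      exact ⟨⟨h1, h2⟩, h3, h4⟩
    · intro ν' hν'
      simp only [nuSet, Finset.mem_filter, Finset.mem_Icc] at hν'
      obtain ⟨⟨h1', h2'⟩, h3', h4'⟩ := hν'
      by_contra hne
      rcases Nat.lt_or_ge ν' ν with hlt' | hge
      · have : i (2*ν') ≤ i (2*ν-1) :=
          aux_imono n i hle hlt (2*ν') (2*ν-1) (by omega) (by omega) (by omega)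
        omega
      · have hlt'' : ν < ν' := by omega
        have : i (2*ν) ≤ i (2*ν'-1) :=
          aux_imono n i hle hlt (2*ν) (2*ν'-1) (by omega) (by omega) (by omega)
        omega
  rw [hset, Finset.sup_singleton, id]

lemma aux_muSet_sup (n : ℕ) (i : ℕ → ℕ)
    (hle : ∀ t, 1 ≤ t → t ≤ n → i (2*t-1) ≤ i (2*t))
    (hlt : ∀ t, 1 ≤ t → t < n → i (2*t) < i (2*t+1))
    {μ k : ℕ} (h1 : 1 ≤ μ) (h2 : μ ≤ n) (h3 : i (2*μ) + 1 ≤ k) (h4 : k ≤ i (2*μ+1)) :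
    (muSet n i k).sup id = μ := by
  have hset : muSet n i k = {μ} := by
    rw [Finset.eq_singleton_iff_unique_mem]
    constructor
    · simp only [muSet, Finset.mem_filter, Finset.mem_Icc]
      exact ⟨⟨h1, h2⟩, h3, h4⟩
    · intro μ' hμ'
      simp only [muSet, Finset.mem_filter, Finset.mem_Icc] at hμ'
      obtain ⟨⟨h1', h2'⟩, h3', h4'⟩ := hμ'
      by_contra hne
      rcases Nat.lt_or_ge μ' μ with hlt' | hge
      · have : i (2*μ'+1) ≤ i (2*μ) :=
          aux_imono n i hle hlt (2*μ'+1) (2*μ) (by omega) (by omega) (by omega)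
        omega
      · have hlt'' : μ < μ' := by omega
        have : i (2*μ+1) ≤ i (2*μ') :=
          aux_imono n i hle hlt (2*μ+1) (2*μ') (by omega) (by omega) (by omega)
        omega
  rw [hset, Finset.sup_singleton, id]

/-- shape of `LpolyFull` for pairs in `JKfin` -/
lemma aux_shape (m n : ℕ) (i : ℕ → ℕ)
    (hle : ∀ t, 1 ≤ t → t ≤ n → i (2*t-1) ≤ i (2*t))
    (hlt : ∀ t, 1 ≤ t → t < n → i (2*t) < i (2*t+1))
    {p : ℕ × ℕ} (hp : p ∈ JKfin m n i) :
    LpolyFull n i p.1 p.2 = Xv p.1 p.2 ∨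
      LpolyFull n i p.1 p.2 = Xv p.1 p.2 - Xv (p.1+1) (p.2+1) := by
  simp only [JKfin, Finset.mem_filter] at hp
  obtain ⟨-, ν, hν, μ, hμ, hνμ, hj1, hj2, hk1, hk2, hnum, -⟩ := hp
  simp only [Finset.mem_Icc] at hν hμ
  have hν' : (nuSet n i p.1).sup id = ν := aux_nuSet_sup n i hle hlt hν.1 hν.2 hj1 hj2
  have hμ' : (muSet n i p.2).sup id = μ := aux_muSet_sup n i hle hlt hμ.1 hμ.2 hk1 hk2
  unfold LpolyFull
  rw [hν', hμ']
  unfold Lpoly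
  rcases eq_or_ne (numL n i ν μ p.1 p.2) 1 with h1 | h1
  · left; simp [h1]
  · right; rw [if_neg hnum, if_neg h1]

lemma aux_coeff_Xv (a b j k : ℕ) :
    MvPolynomial.coeff (Finsupp.single (Sum.inl (j, k) : KVar) 1) (Xv a b)
      = if a = j ∧ b = k then 1 else 0 := by
  rw [Xv, MvPolynomial.coeff_X']
  by_cases h : a = j ∧ b = k
  · obtain ⟨rfl, rfl⟩ := h
    simp
  · rw [if_neg h, if_neg]
    intro hc
    have := (Finsupp.single_left_inj (by norm_num : (1:ℕ) ≠ 0)).1 hc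
    simp only [Sum.inl.injEq, Prod.mk.injEq] at this
    exact h ⟨this.1, this.2⟩

/-- the set `{L^P_(j,k) : (j,k) ∈ JK}` is linearly independent over `ℂ`. -/
theorem stmt7 (m n : ℕ) (i : ℕ → ℕ)
    (hm : 3 ≤ m) (h0 : i 0 = 0) (htop : i (2*n+1) = m - 3)
    (hub : ∀ t, 1 ≤ t → t ≤ 2*n → i t ≤ m - 3)
    (hle : ∀ t, 1 ≤ t → t ≤ n → i (2*t-1) ≤ i (2*t))
    (hlt : ∀ t, 1 ≤ t → t < n → i (2*t) < i (2*t+1)) :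
    LinearIndependent ℂ
      (fun f : {q : KR // ∃ p ∈ JKfin m n i, q = LpolyFull n i p.1 p.2} => (f : KR)) := by
  classical
  rw [linearIndependent_iff']
  intro s g hsum
  by_contra hcon
  push_neg at hcon
  obtain ⟨f₁, hf₁s, hf₁⟩ := hcon
  -- choose pairs
  have hch : ∀ f : {q : KR // ∃ p ∈ JKfin m n i, q = LpolyFull n i p.1 p.2},
      ∃ p, p ∈ JKfin m n i ∧ (f : KR) = LpolyFull n i p.1 p.2 := by
    intro f
    obtain ⟨p, hp1, hp2⟩ := f.2
    exact ⟨p, hp1, hp2⟩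
  choose pf hpf1 hpf2 using hch
  -- the set of nonzero coefficients
  set T := s.filter (fun f => g f ≠ 0) with hT
  have hTne : T.Nonempty := ⟨f₁, by simp [hT, hf₁s, hf₁]⟩
  obtain ⟨f₀, hf₀T, hf₀min⟩ := T.exists_min_image (fun f => (pf f).1) hTne
  have hf₀s : f₀ ∈ s := (Finset.mem_filter.1 hf₀T).1
  have hgf₀ : g f₀ ≠ 0 := (Finset.mem_filter.1 hf₀T).2
  -- apply the coefficient functional at the pivot monomial of f₀
  set d₀ : KVar →₀ ℕ := Finsupp.single (Sum.inl ((pf f₀).1, (pf f₀).2)) 1 with hd₀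
  have hj₀pos : 1 ≤ (pf f₀).1 := by
    have := hpf1 f₀
    simp only [JKfin, Finset.mem_filter, Finset.mem_product, Finset.mem_Icc] at this
    exact this.1.1.1
  have happ := congrArg (MvPolynomial.lcoeff ℂ d₀) hsum
  rw [map_sum, map_zero] at happ
  simp only [map_smul] at happ
  -- compute each summand
  have hcoeff : ∀ f ∈ s, f ≠ f₀ →
      g f • (MvPolynomial.lcoeff ℂ d₀) (f : KR) = 0 := by
    intro f hfs hfne
    have hne : pf f ≠ pf f₀ := by
      intro hpe
      apply hfne
      apply Subtype.ext
      rw [hpf2 f, hpf2 f₀, hpe]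
    rcases aux_shape m n i hle hlt (hpf1 f) with hsh | hsh
    · have : (MvPolynomial.lcoeff ℂ d₀) (f : KR) = 0 := by
        rw [MvPolynomial.lcoeff_apply, hpf2 f, hsh, hd₀, aux_coeff_Xv, if_neg]
        intro hc
        exact hne (Prod.ext hc.1 hc.2)
      rw [this, smul_zero]
    · by_cases hg : g f = 0
      · rw [hg, zero_smul]
      · have hfT : f ∈ T := Finset.mem_filter.2 ⟨hfs, hg⟩
        have hmin := hf₀min f hfT
        have : (MvPolynomial.lcoeff ℂ d₀) (f : KR) = 0 := by
          rw [MvPolynomial.lcoeff_apply, hpf2 f, hsh, hd₀]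
          rw [MvPolynomial.coeff_sub, aux_coeff_Xv, aux_coeff_Xv]
          rw [if_neg (fun hc => hne (Prod.ext hc.1 hc.2)), if_neg, sub_zero]
          intro hc
          omega
        rw [this, smul_zero]
  rw [Finset.sum_eq_single f₀ hcoeff (fun h => absurd hf₀s h)] at happ
  have hc₀ : (MvPolynomial.lcoeff ℂ d₀) (f₀ : KR) = 1 := by
    rcases aux_shape m n i hle hlt (hpf1 f₀) with hsh | hsh
    · rw [MvPolynomial.lcoeff_apply, hpf2 f₀, hsh, hd₀, aux_coeff_Xv, if_pos ⟨rfl, rfl⟩]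
    · rw [MvPolynomial.lcoeff_apply, hpf2 f₀, hsh, hd₀, MvPolynomial.coeff_sub,
        aux_coeff_Xv, aux_coeff_Xv, if_pos ⟨rfl, rfl⟩, if_neg (by omega), sub_zero]
  rw [hc₀, smul_eq_mul, mul_one] at happ
  exact hgf₀ happ


end
end

section
/- Define a relation → on JK by declaring (j,k) → (j′,k′) if and only if the variable x(j,k) divides some monomial of total degree at least 2 of D̂^P_{j′,k′}. Then → has no directed cycles; equivalently, the reflexive-transitive closure of → is a partial order on JK. -/
open scoped Classical

noncomputable section

/-!
Every variable `x(a,b)` of `D^P_{j,k}` is the leading variable `x(j,k)`, lies in a row `a > j`,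
or lies in a column `b = i_{2t+1} < k` with `1 ≤ t < n`; the last kind of column never carries a
pair of `JK`, by monotonicity of `P`. Passing to `D̂^P_{j,k}` only adds `y`-variables and the
variables of `D^{P′}_{j,c}` with `c ∈ A(P)`, which is disjoint from the columns of `JK`, while the
odd entries of `P′` are odd entries of `P`. Hence along every arrow `(a,b) → (j,k)` either the two
pairs agree or the row strictly decreases, so the relation has no cycles.
-/

open MvPolynomial

theorem Relation.ReflTransGen.antisymm_of_eq_or_map_lt {α β : Type*} [Preorder β]
    {r : α → α → Prop} (f : α → β) (hr : ∀ a b, r a b → a = b ∨ f b < f a) {a b : α}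
    (hab : Relation.ReflTransGen r a b) (hba : Relation.ReflTransGen r b a) : a = b := by
  have chain : ∀ {a b}, Relation.ReflTransGen r a b → a = b ∨ f b < f a := by
    intro a b h
    induction h with
    | refl => exact Or.inl rfl
    | tail _ hbc ih =>
      rcases hr _ _ hbc with rfl | hlt
      · exact ih
      · exact Or.inr (ih.elim (fun h => h ▸ hlt) hlt.trans)
  rcases chain hab with h | h
  · exact h
  rcases chain hba with h' | h'
  · exact h'.symm
  · exact absurd (h.trans h') (lt_irrefl _)

theorem monotoneOn_Icc_of_interlaced {m n : ℕ} {i : ℕ → ℕ} (htop : i (2*n+1) = m - 3)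
    (hub : ∀ t, 1 ≤ t → t ≤ 2*n → i t ≤ m - 3)
    (hle : ∀ t, 1 ≤ t → t ≤ n → i (2*t-1) ≤ i (2*t))
    (hlt : ∀ t, 1 ≤ t → t < n → i (2*t) < i (2*t+1)) :
    MonotoneOn i (Set.Icc 1 (2*n+1)) := by
  refine monotoneOn_of_le_succ Set.ordConnected_Icc fun a _ ha hsa => ?_
  rw [Order.succ_eq_add_one] at hsa ⊢
  obtain ⟨ha1, -⟩ := ha
  obtain ⟨-, hsa⟩ := hsa
  rcases Nat.even_or_odd' a with ⟨u, rfl | rfl⟩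
  · rcases Nat.lt_or_ge u n with hu | hu
    · exact (hlt u (by omega) hu).le
    · obtain rfl : u = n := by omega
      exact htop ▸ hub (2*u) (by omega) le_rfl
  · have h := hle (u+1) (by omega) (by omega)
    rwa [show 2*(u+1)-1 = 2*u+1 by omega, show 2*(u+1) = 2*u+1+1 by ring] at h

section Support

variable {n : ℕ} {i : ℕ → ℕ}

def IsInnerOddEntry (n : ℕ) (i : ℕ → ℕ) (b : ℕ) : Prop := ∃ t, 1 ≤ t ∧ t < n ∧ b = i (2*t+1)

/-- The positions `(a,b)` at which `D^P_{j,k}` can have a variable `x(a,b)`. -/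
def dPositions (n : ℕ) (i : ℕ → ℕ) (j k : ℕ) : Set (ℕ × ℕ) :=
  {p | p = (j, k) ∨ j < p.1 ∨ (p.2 < k ∧ IsInnerOddEntry n i p.2)}

theorem Xv_mem_supported {s : Set (ℕ × ℕ)} {a b : ℕ} :
    Xv a b ∈ supported ℂ (Sum.inl '' s) ↔ (a, b) ∈ s := by
  rw [Xv, X_mem_supported, Sum.inl_injective.mem_set_image]

variable {j k : ℕ}

theorem mk_mem_dPositions_of_lt {a b : ℕ} (h : j < a) : (a, b) ∈ dPositions n i j k :=
  Or.inr (Or.inl h)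

theorem mk_mem_dPositions_of_le {a : ℕ} (h : j ≤ a) : (a, k) ∈ dPositions n i j k := by
  rcases h.eq_or_lt with rfl | h
  exacts [Or.inl rfl, Or.inr (Or.inl h)]

theorem mk_mem_dPositions_of_odd (hi : MonotoneOn i (Set.Icc 1 (2*n+1))) {μ t a : ℕ}
    (ht : 1 ≤ t) (htμ : t < μ) (hμ : μ ≤ n) (hk : i (2*μ) < k) :
    (a, i (2*t+1)) ∈ dPositions n i j k :=
  Or.inr (Or.inr ⟨(hi ⟨by omega, by omega⟩ ⟨by omega, by omega⟩ (by omega)).trans_lt hk,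
    t, ht, by omega, rfl⟩)

variable {ν μ : ℕ}

theorem phiT_mem_supported (hi : MonotoneOn i (Set.Icc 1 (2*n+1))) (hν : 1 ≤ ν) (hμ : μ ≤ n)
    (hj : j ≤ i (2*ν)) (hk : i (2*μ) < k) {η α mc mp : ℕ} (hmc : ν ≤ mc ∧ mc ≤ μ)
    (hmp : 2 ≤ α → (η = 1 ↔ α % 2 = 1) → ν ≤ mp ∧ mp < μ) :
    phiT i η k α mc mp ∈ supported ℂ (Sum.inl '' dPositions n i j k) := by
  have hrow : j ≤ i (2*mc) := hj.trans (hi ⟨by omega, by omega⟩ ⟨by omega, by omega⟩ (by omega))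
  have hrow' : j ≤ i (2*mc+1) :=
    hj.trans (hi ⟨by omega, by omega⟩ ⟨by omega, by omega⟩ (by omega))
  unfold phiT
  split_ifs
  · exact one_mem _
  · exact Xv_mem_supported.2 (mk_mem_dPositions_of_le hrow)
  · exact Xv_mem_supported.2 (mk_mem_dPositions_of_lt (by omega))
  · exact Xv_mem_supported.2 (mk_mem_dPositions_of_lt (by omega))
  · obtain ⟨h1, h2⟩ := hmp (by omega) (by omega)
    exact Xv_mem_supported.2 (mk_mem_dPositions_of_odd hi (by omega) h2 hμ hk)
  · obtain ⟨h1, h2⟩ := hmp (by omega) (by omega)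
    exact Xv_mem_supported.2 (mk_mem_dPositions_of_odd hi (by omega) h2 hμ hk)
  · exact Xv_mem_supported.2 (mk_mem_dPositions_of_lt (by omega))

theorem phiF_mem_supported (hi : MonotoneOn i (Set.Icc 1 (2*n+1))) (hν : 1 ≤ ν) (hμ : μ ≤ n)
    (hk : i (2*μ) < k) {η β mc : ℕ}
    (hmc : 1 ≤ β → (η = 1 ↔ β % 2 = 0) → ν ≤ mc ∧ mc < μ) :
    phiF i η j k β mc ∈ supported ℂ (Sum.inl '' dPositions n i j k) := by
  unfold phiF
  split_ifs
  · exact Xv_mem_supported.2 (mk_mem_dPositions_of_le le_rfl)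
  · exact Xv_mem_supported.2 (mk_mem_dPositions_of_lt (by omega))
  · obtain ⟨h1, h2⟩ := hmc (by omega) (by omega)
    exact Xv_mem_supported.2 (mk_mem_dPositions_of_odd hi (by omega) h2 hμ hk)
  · exact Xv_mem_supported.2 (mk_mem_dPositions_of_lt (by omega))
  · exact Xv_mem_supported.2 (mk_mem_dPositions_of_lt (by omega))
  · obtain ⟨h1, h2⟩ := hmc (by omega) (by omega)
    exact Xv_mem_supported.2 (mk_mem_dPositions_of_odd hi (by omega) h2 hμ hk)

theorem tupCond.lt_of_parity {η ν μ β : ℕ} {G : ℕ → ℕ} (h : tupCond η ν μ β G) {l : ℕ}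
    (hl : 2 ≤ l) (hlβ : l ≤ β + 1) (hpar : η = 1 ↔ l % 2 = 1) : G (l-1) < G (l-2) := by
  obtain ⟨-, -, hstep⟩ := h
  split_ifs at hstep with hη
  · have h := (hstep ((l-1)/2) (by omega)).1 (by omega)
    rwa [show 2*((l-1)/2) = l-1 by omega, show l-1-1 = l-2 by omega] at h
  · have h := (hstep (l/2) (by omega)).1 (by omega)
    rwa [show 2*(l/2)-1 = l-1 by omega, show 2*(l/2)-2 = l-2 by omega] at h

theorem phiF_mul_prod_phiT_mem_supported (hi : MonotoneOn i (Set.Icc 1 (2*n+1))) (hν : 1 ≤ ν)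
    (hμ : μ ≤ n) (hj : j ≤ i (2*ν)) (hk : i (2*μ) < k) {η β : ℕ} {G : ℕ → ℕ}
    (hG : tupCond η ν μ β G) :
    phiF i η j k β (G β) * ∏ l ∈ Finset.range (β+1), phiT i η k l (G l) (G (l-1)) ∈
      supported ℂ (Sum.inl '' dPositions n i j k) := by
  have hbound := hG.2.1
  refine mul_mem (phiF_mem_supported hi hν hμ hk fun hβ hpar => ⟨(hbound β le_rfl).1, ?_⟩)
    (prod_mem fun l hl => ?_)
  · have h := hG.lt_of_parity (l := β+1) (by omega) le_rfl (by omega)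
    rw [Nat.add_sub_cancel, show β+1-2 = β-1 by omega] at h
    exact h.trans_le (hbound (β-1) (by omega)).2
  · rw [Finset.mem_range] at hl
    refine phiT_mem_supported hi hν hμ hj hk (hbound l (by omega))
      fun hl2 hpar => ⟨(hbound (l-1) (by omega)).1, ?_⟩
    exact (hG.lt_of_parity hl2 (by omega) hpar).trans_le (hbound (l-2) (by omega)).2

theorem Dcore_mem_supported (hi : MonotoneOn i (Set.Icc 1 (2*n+1))) (hν : 1 ≤ ν) (hμ : μ ≤ n)
    (hj : j ≤ i (2*ν)) (hk : i (2*μ) < k) :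
    Dcore n i ν μ j k ∈ supported ℂ (Sum.inl '' dPositions n i j k) := by
  unfold Dcore
  refine sum_mem fun η _ => mul_mem (pow_mem (neg_mem (one_mem _)) _) ?_
  refine sum_mem fun β _ => sum_mem fun g hg => ?_
  exact phiF_mul_prod_phiT_mem_supported
    (G := fun t => if h : t < β + 1 then ((g ⟨t, h⟩ : Fin (μ+1)) : ℕ) else 0)
    hi hν hμ hj hk (Finset.mem_filter.mp hg).2

theorem Dfull_mem_supported (hi : MonotoneOn i (Set.Icc 1 (2*n+1))) (j k : ℕ) :
    Dfull n i j k ∈ supported ℂ (Sum.inl '' dPositions n i j k) := by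
  unfold Dfull
  split_ifs with h
  · obtain ⟨hne, hne', -⟩ := h
    obtain ⟨ν, hν, hνe⟩ := Finset.exists_mem_eq_sup _ hne id
    obtain ⟨μ, hμ, hμe⟩ := Finset.exists_mem_eq_sup _ hne' id
    simp only [nuSet, muSet, Finset.mem_filter, Finset.mem_Icc] at hν hμ
    rw [hνe, hμe]
    exact Dcore_mem_supported hi hν.1.1 hμ.1.2 hν.2.2 hμ.2.1
  · exact zero_mem _

theorem not_mem_JKfin_of_isInnerOddEntry {m : ℕ} (hi : MonotoneOn i (Set.Icc 1 (2*n+1)))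
    (htop : i (2*n+1) = m - 3) {p : ℕ × ℕ} (hp : p.2 < m - 3) (hodd : IsInnerOddEntry n i p.2) :
    p ∉ JKfin m n i := by
  obtain ⟨t, ht, htn, hpt⟩ := hodd
  simp only [JKfin, Finset.mem_filter, Finset.mem_Icc, not_and, not_exists]
  intro _ ν _ μ hμ _ _ _ hk hk' hL _
  unfold numL at hL
  split_ifs at hL
  · omega
  · omega
  · rcases Nat.lt_or_ge t μ with htμ | hμt
    · have := hi ⟨by omega, by omega⟩ ⟨by omega, by omega⟩ (by omega : 2*t+1 ≤ 2*μ)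
      omega
    · have := hi ⟨by omega, by omega⟩ ⟨by omega, by omega⟩ (by omega : 2*μ+1 ≤ 2*t+1)
      omega
  · exact hL rfl

end Support

section Reduction

variable {m n : ℕ} {i : ℕ → ℕ}

theorem survivors_getD_mem_Icc {u : ℕ} (hu : u < nP' n i) :
    (survivors n i).getD u 0 ∈ Finset.Icc 1 n := by
  rw [List.getD_eq_getElem _ _ hu]
  have h := List.getElem_mem (l := survivors n i) hu
  simp only [survivors, Finset.mem_sort, Finset.mem_filter] at h
  exact h.1

theorem survivors_getD_lt {u v : ℕ} (huv : u < v) (hv : v < nP' n i) :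
    (survivors n i).getD u 0 < (survivors n i).getD v 0 := by
  rw [List.getD_eq_getElem _ _ (huv.trans hv), List.getD_eq_getElem _ _ hv]
  exact (Finset.sortedLT_sort _).getElem_lt_getElem_iff.mpr huv

theorem iP'_two_mul_add_one {u : ℕ} (hu : u < nP' n i) :
    iP' m n i (2*u+1) = i (2 * (survivors n i).getD u 0 - 1) := by
  simp only [iP', if_neg (by omega : 2*u+1 ≠ 0), if_pos (by omega : 2*u+1 ≤ 2 * nP' n i),
    if_pos (by omega : (2*u+1) % 2 = 1), show (2*u+1+1)/2 - 1 = u by omega]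

theorem iP'_two_mul_add_two {u : ℕ} (hu : u < nP' n i) :
    iP' m n i (2*u+2) = i (2 * (survivors n i).getD u 0) := by
  simp only [iP', if_neg (by omega : 2*u+2 ≠ 0), if_pos (by omega : 2*u+2 ≤ 2 * nP' n i),
    if_neg (by omega : ¬ (2*u+2) % 2 = 1), show (2*u+2)/2 - 1 = u by omega]

theorem iP'_two_mul_nP'_add_one : iP' m n i (2 * nP' n i + 1) = m - 3 := by
  simp [iP']

theorem monotoneOn_iP' (hi : MonotoneOn i (Set.Icc 1 (2*n+1))) (htop : i (2*n+1) = m - 3) :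
    MonotoneOn (iP' m n i) (Set.Icc 1 (2 * nP' n i + 1)) := by
  refine monotoneOn_of_le_succ Set.ordConnected_Icc fun a _ ha hsa => ?_
  rw [Order.succ_eq_add_one] at hsa ⊢
  obtain ⟨ha1, -⟩ := ha
  obtain ⟨-, hsa⟩ := hsa
  have hi' : ∀ s t, 1 ≤ s → s ≤ t → t ≤ 2*n+1 → i s ≤ i t :=
    fun s t h1 hst ht => hi ⟨h1, by omega⟩ ⟨by omega, ht⟩ hst
  have hmem : ∀ u < nP' n i, 1 ≤ (survivors n i).getD u 0 ∧ (survivors n i).getD u 0 ≤ n :=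
    fun _ hu => Finset.mem_Icc.mp (survivors_getD_mem_Icc hu)
  rcases Nat.even_or_odd' a with ⟨u, rfl | rfl⟩
  · obtain ⟨u, rfl⟩ : ∃ v, u = v + 1 := ⟨u - 1, by omega⟩
    have hs := hmem u (by omega)
    rw [show 2*(u+1) = 2*u+2 by ring, iP'_two_mul_add_two (by omega)]
    rcases Nat.lt_or_ge (u+1) (nP' n i) with hu | hu
    · have hlt := survivors_getD_lt (n := n) (i := i) (by omega : u < u+1) hu
      have hs' := hmem (u+1) hu
      rw [show 2*u+2+1 = 2*(u+1)+1 by ring, iP'_two_mul_add_one hu]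
      exact hi' _ _ (by omega) (by omega) (by omega)
    · rw [show 2*u+2+1 = 2 * nP' n i + 1 by omega, iP'_two_mul_nP'_add_one, ← htop]
      exact hi' _ _ (by omega) (by omega) le_rfl
  · have hs := hmem u (by omega)
    rw [iP'_two_mul_add_one (by omega), show 2*u+1+1 = 2*u+2 by ring,
      iP'_two_mul_add_two (by omega)]
    exact hi' _ _ (by omega) (by omega) (by omega)

theorem IsInnerOddEntry.of_iP' {b : ℕ} (h : IsInnerOddEntry (nP' n i) (iP' m n i) b) :
    IsInnerOddEntry n i b := by
  obtain ⟨t, ht, htn, rfl⟩ := h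
  have hs := Finset.mem_Icc.mp (survivors_getD_mem_Icc htn)
  have hs0 := Finset.mem_Icc.mp (survivors_getD_mem_Icc (by omega : 0 < nP' n i))
  have hlt := survivors_getD_lt (by omega : 0 < t) htn
  refine ⟨(survivors n i).getD t 0 - 1, by omega, by omega, ?_⟩
  rw [iP'_two_mul_add_one htn]
  congr 1
  omega

end Reduction

section Acyclic

variable {m n : ℕ} {i : ℕ → ℕ}

theorem mem_dPositions_of_mem_vars_Dfull (hi : MonotoneOn i (Set.Icc 1 (2*n+1))) {j k : ℕ}
    {p : ℕ × ℕ} (hv : Sum.inl p ∈ (Dfull n i j k).vars) : p ∈ dPositions n i j k :=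
  Sum.inl_injective.mem_set_image.mp (mem_supported.mp (Dfull_mem_supported hi j k) hv)

theorem eq_or_fst_lt_of_mem_dPositions (hi : MonotoneOn i (Set.Icc 1 (2*n+1)))
    (htop : i (2*n+1) = m - 3) {p : ℕ × ℕ} (hp : p ∈ JKfin m n i) {n' : ℕ} {i' : ℕ → ℕ}
    (hodd : ∀ b, IsInnerOddEntry n' i' b → IsInnerOddEntry n i b) {j c : ℕ} (hc : c ≤ m - 3)
    (h : p ∈ dPositions n' i' j c) : p = (j, c) ∨ j < p.1 := by
  rcases h with h | h | ⟨hpc, hpodd⟩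
  · exact Or.inl h
  · exact Or.inr h
  · exact absurd hp (not_mem_JKfin_of_isInnerOddEntry hi htop (by omega) (hodd _ hpodd))

theorem eq_or_fst_lt_of_mem_vars_Dhat (hi : MonotoneOn i (Set.Icc 1 (2*n+1)))
    (htop : i (2*n+1) = m - 3) {p q : ℕ × ℕ} (hp : p ∈ JKfin m n i) (hq : q ∈ JKfin m n i)
    (hv : Sum.inl p ∈ (Dhat m n i q.1 q.2).vars) : p = q ∨ q.1 < p.1 := by
  have hk : q.2 ≤ m - 3 := by
    simp only [JKfin, Finset.mem_filter, Finset.mem_product, Finset.mem_Icc] at hq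
    exact hq.1.2.2
  have hpA : p.2 ∉ Aval n i := by
    simp only [JKfin, Finset.mem_filter] at hp
    obtain ⟨-, _, -, _, -, -, -, -, -, -, -, h⟩ := hp
    exact h
  unfold Dhat at hv
  split_ifs at hv
  · exact eq_or_fst_lt_of_mem_dPositions hi htop hp (fun _ => id) hk
      (mem_dPositions_of_mem_vars_Dfull hi hv)
  have hi' := monotoneOn_iP' hi htop
  have hodd : ∀ b, IsInnerOddEntry (nP' n i) (iP' m n i) b → IsInnerOddEntry n i b :=
    fun _ => IsInnerOddEntry.of_iP'
  rcases Finset.mem_union.mp (vars_sub_subset _ hv) with h | h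
  · exact eq_or_fst_lt_of_mem_dPositions hi htop hp hodd hk
      (mem_dPositions_of_mem_vars_Dfull hi' h)
  obtain ⟨b, hb, h⟩ := Finset.mem_biUnion.mp (vars_sum_subset _ _ h)
  rcases Finset.mem_union.mp (vars_mul _ _ h) with h | h
  · simp [Yv, vars_X] at h
  have hb' := Finset.mem_Icc.mp (Finset.mem_filter.mp hb).1
  have hc : i (2*b) ≤ m - 3 := htop ▸ hi ⟨by omega, by omega⟩ ⟨by omega, le_rfl⟩ (by omega)
  rcases eq_or_fst_lt_of_mem_dPositions hi htop hp hodd hc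
    (mem_dPositions_of_mem_vars_Dfull hi' h) with rfl | h
  · exact absurd (Finset.mem_image_of_mem _ hb) hpA
  · exact Or.inr h

end Acyclic

theorem stmt8_general (m n : ℕ) (i : ℕ → ℕ)
    (htop : i (2*n+1) = m - 3)
    (hub : ∀ t, 1 ≤ t → t ≤ 2*n → i t ≤ m - 3)
    (hle : ∀ t, 1 ≤ t → t ≤ n → i (2*t-1) ≤ i (2*t))
    (hlt : ∀ t, 1 ≤ t → t < n → i (2*t) < i (2*t+1)) :
    ∀ p q : ℕ × ℕ,
      Relation.ReflTransGen (fun p q : ℕ × ℕ =>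
        p ∈ JKfin m n i ∧ q ∈ JKfin m n i ∧
        ∃ d ∈ (Dhat m n i q.1 q.2).support, 2 ≤ d.sum (fun _ e => e) ∧ d (Sum.inl p) ≠ 0) p q →
      Relation.ReflTransGen (fun p q : ℕ × ℕ =>
        p ∈ JKfin m n i ∧ q ∈ JKfin m n i ∧
        ∃ d ∈ (Dhat m n i q.1 q.2).support, 2 ≤ d.sum (fun _ e => e) ∧ d (Sum.inl p) ≠ 0) q p →
      p = q := by
  have hi := monotoneOn_Icc_of_interlaced htop hub hle hlt
  intro p q
  refine Relation.ReflTransGen.antisymm_of_eq_or_map_lt Prod.fst ?_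
  rintro a b ⟨ha, hb, d, hd, -, hda⟩
  exact eq_or_fst_lt_of_mem_vars_Dhat hi htop ha hb
    ((mem_vars_iff_mem_support _).mpr ⟨d, hd, Finsupp.mem_support_iff.mpr hda⟩)

/-- the relation `(j,k) → (j',k')` iff `x(j,k)` divides a monomial of total
degree at least `2` of `D̂^P_(j',k')` has no directed cycles: its reflexive-transitive
closure is antisymmetric (hence a partial order on `JK`). -/
theorem stmt8 (m n : ℕ) (i : ℕ → ℕ)
    (hm : 3 ≤ m) (h0 : i 0 = 0) (htop : i (2*n+1) = m - 3)
    (hub : ∀ t, 1 ≤ t → t ≤ 2*n → i t ≤ m - 3)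
    (hle : ∀ t, 1 ≤ t → t ≤ n → i (2*t-1) ≤ i (2*t))
    (hlt : ∀ t, 1 ≤ t → t < n → i (2*t) < i (2*t+1)) :
    ∀ p q : ℕ × ℕ,
      Relation.ReflTransGen (fun p q : ℕ × ℕ =>
        p ∈ JKfin m n i ∧ q ∈ JKfin m n i ∧
        ∃ d ∈ (Dhat m n i q.1 q.2).support, 2 ≤ d.sum (fun _ e => e) ∧ d (Sum.inl p) ≠ 0) p q →
      Relation.ReflTransGen (fun p q : ℕ × ℕ =>
        p ∈ JKfin m n i ∧ q ∈ JKfin m n i ∧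
        ∃ d ∈ (Dhat m n i q.1 q.2).support, 2 ≤ d.sum (fun _ e => e) ∧ d (Sum.inl p) ≠ 0) q p →
      p = q :=
  stmt8_general m n i htop hub hle hlt

end
end

section
/- Let φ_1, φ_2 : ℂ^{m−3} → ℂ^{m−2} be the linear maps φ_1(z_1,…,z_{m−3}) = (z_1,…,z_{m−3},0) and φ_2(z_1,…,z_{m−3}) = (0,z_1,…,z_{m−3}). For every ℂ-algebra homomorphism ev : R → ℂ, let U ⊆ ℂ^{m−3} be the span of the rows of the complex matrix obtained by applying ev entrywise to N_2(P), and let V ⊆ ℂ^{m−2} be the span of the rows of the complex matrix obtained by applying ev entrywise to N_1(P). Then φ_1(U) ⊆ V and φ_2(U) ⊆ V; i.e., the pair (V, U) is a subrepresentation of the Kronecker-quiver representation M(m) = (ℂ^{m−2}, ℂ^{m−3}; φ_1, φ_2). -/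
open scoped Classical

noncomputable section

lemma N2e_eq_zero_of_out (m n : ℕ) (i : ℕ → ℕ) (a b : ℕ) (hb : ¬ (1 ≤ b ∧ b ≤ m - 3)) :
    N2e m n i a b = 0 := by
  unfold N2e
  rw [if_neg]
  rintro ⟨-, h1, h2⟩
  exact hb ⟨h1, h2⟩

lemma Bfin_mem_bounds (m n : ℕ) (i : ℕ → ℕ)
    (hub : ∀ t, 1 ≤ t → t ≤ 2*n → i t ≤ m - 3)
    {a : ℕ} (ha : a ∈ Bfin n i) : 1 ≤ a ∧ a ≤ m - 3 := by
  simp only [Bfin, Finset.mem_biUnion, Finset.mem_Icc] at ha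
  obtain ⟨j, hj, hja1, hja2⟩ := ha
  have := hub (2*j) (by omega) (by omega)
  omega

lemma N1e_low (m n : ℕ) (i : ℕ → ℕ) (a b : ℕ) (h : a ≤ m) :
    N1e m n i a b = N2e m n i a b := by
  unfold N1e; rw [if_pos h]

lemma N1e_shift (m n : ℕ) (i : ℕ → ℕ) (a b : ℕ) (h1 : 1 ≤ a) (h2 : a ≤ m) :
    N1e m n i (m + a) b = N2e m n i a (b - 1) := by
  unfold N1e
  rw [if_neg (by omega), if_pos (by omega)]
  congr 1
  omega

/-- for every evaluation `ev : R → ℂ`, with `U` the row span of `ev(N₂(P))`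
and `V` the row span of `ev(N₁(P))`, one has `φ₁(U) ⊆ V` and `φ₂(U) ⊆ V`, where
`φ₁(z) = (z, 0)` and `φ₂(z) = (0, z)`; i.e. `(V, U)` is a subrepresentation of `M(m)`. -/
theorem stmt11 (m n : ℕ) (i : ℕ → ℕ)
    (hm : 3 ≤ m) (h0 : i 0 = 0) (htop : i (2*n+1) = m - 3)
    (hub : ∀ t, 1 ≤ t → t ≤ 2*n → i t ≤ m - 3)
    (hle : ∀ t, 1 ≤ t → t ≤ n → i (2*t-1) ≤ i (2*t))
    (hlt : ∀ t, 1 ≤ t → t < n → i (2*t) < i (2*t+1)) :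
    ∀ ev : KR →ₐ[ℂ] ℂ, ∀ u : Fin (m-3) → ℂ,
      u ∈ Submodule.span ℂ
        {v : Fin (m-3) → ℂ | ∃ a ∈ Bfin n i, v = fun q : Fin (m-3) => ev (N2e m n i a ((q : ℕ) + 1))} →
      ((fun q : Fin (m-2) => if h : (q : ℕ) < m - 3 then u ⟨(q : ℕ), h⟩ else 0) ∈
          Submodule.span ℂ
            {w : Fin (m-2) → ℂ | ∃ r ∈ rowsFS m n i,
              w = fun q : Fin (m-2) => ev (N1e m n i r ((q : ℕ) + 1))} ∧
       (fun q : Fin (m-2) =>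
          if h : 1 ≤ (q : ℕ) ∧ (q : ℕ) - 1 < m - 3 then u ⟨(q : ℕ) - 1, h.2⟩ else 0) ∈
          Submodule.span ℂ
            {w : Fin (m-2) → ℂ | ∃ r ∈ rowsFS m n i,
              w = fun q : Fin (m-2) => ev (N1e m n i r ((q : ℕ) + 1))}) := by
  intro ev u hu
  set S : Set (Fin (m-2) → ℂ) := {w | ∃ r ∈ rowsFS m n i,
      w = fun q : Fin (m-2) => ev (N1e m n i r ((q : ℕ) + 1))} with hS
  let φ1 : (Fin (m-3) → ℂ) →ₗ[ℂ] (Fin (m-2) → ℂ) :=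
    { toFun := fun v q => if h : (q : ℕ) < m - 3 then v ⟨(q : ℕ), h⟩ else 0
      map_add' := by intro v w; funext q; split <;> rename_i h <;> simp [h]
      map_smul' := by intro c v; funext q; split <;> rename_i h <;> simp [h] }
  let φ2 : (Fin (m-3) → ℂ) →ₗ[ℂ] (Fin (m-2) → ℂ) :=
    { toFun := fun v q =>
        if h : 1 ≤ (q : ℕ) ∧ (q : ℕ) - 1 < m - 3 then v ⟨(q : ℕ) - 1, h.2⟩ else 0
      map_add' := by intro v w; funext q; split <;> rename_i h <;> simp [h]
      map_smul' := by intro c v; funext q; split <;> rename_i h <;> simp [h] }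
  constructor
  · have hle1 : Submodule.span ℂ
        {v : Fin (m-3) → ℂ | ∃ a ∈ Bfin n i,
          v = fun q : Fin (m-3) => ev (N2e m n i a ((q : ℕ) + 1))} ≤
        (Submodule.span ℂ S).comap φ1 := by
      rw [Submodule.span_le]
      rintro v ⟨a, ha, rfl⟩
      have hab := Bfin_mem_bounds m n i hub ha
      rw [SetLike.mem_coe, Submodule.mem_comap]
      apply Submodule.subset_span
      refine ⟨a, ?_, ?_⟩
      · simp only [rowsFS, Finset.mem_union]
        exact Or.inl (Or.inl ha)
      · funext q
        show (if h : (q : ℕ) < m - 3 then ev (N2e m n i a ((q : ℕ) + 1)) else 0) = _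
        rw [N1e_low m n i a _ (by omega)]
        by_cases h : (q : ℕ) < m - 3
        · rw [dif_pos h]
        · rw [dif_neg h, N2e_eq_zero_of_out m n i a ((q : ℕ) + 1) (by omega)]
          exact (map_zero ev).symm
    exact hle1 hu
  · have hle2 : Submodule.span ℂ
        {v : Fin (m-3) → ℂ | ∃ a ∈ Bfin n i,
          v = fun q : Fin (m-3) => ev (N2e m n i a ((q : ℕ) + 1))} ≤
        (Submodule.span ℂ S).comap φ2 := by
      rw [Submodule.span_le]
      rintro v ⟨a, ha, rfl⟩
      have hab := Bfin_mem_bounds m n i hub ha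
      rw [SetLike.mem_coe, Submodule.mem_comap]
      apply Submodule.subset_span
      refine ⟨m + a, ?_, ?_⟩
      · simp only [rowsFS, Finset.mem_union]
        exact Or.inl (Or.inr (Finset.mem_image.2 ⟨a, ha, rfl⟩))
      · funext q
        show (if h : 1 ≤ (q : ℕ) ∧ (q : ℕ) - 1 < m - 3 then
            ev (N2e m n i a ((q : ℕ) - 1 + 1)) else 0) = _
        rw [N1e_shift m n i a _ (by omega) (by omega)]
        have hq : (q : ℕ) < m - 2 := q.isLt
        by_cases h : 1 ≤ (q : ℕ) ∧ (q : ℕ) - 1 < m - 3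
        · rw [dif_pos h]
          congr 2
          omega
        · rw [dif_neg h]
          have hq0 : (q : ℕ) = 0 := by omega
          rw [show (q : ℕ) + 1 - 1 = (q : ℕ) from by omega, hq0,
            N2e_eq_zero_of_out m n i a 0 (by omega)]
          exact (map_zero ev).symm
    exact hle2 hu

end
end

section
/- For all integers 1 ≤ ν ≤ μ, the sets F_1^{(ν,μ)} and F_2^{(ν,μ)} are finite, and their cardinalities are Fibonacci numbers; precisely, |F_1^{(ν,μ)}| = Fib(2(μ−ν)+3) and |F_2^{(ν,μ)}| = Fib(2(μ−ν)+2), where Fib is the Fibonacci sequence with Fib(1) = Fib(2) = 1. -/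
/-- The chain conditions defining the Fibonacci tree `F_η^{(ν,μ)}`. -/
def chainCond (η : ℕ) (l : List ℕ) : Prop :=
  if η = 1 then
    ∀ t, 1 ≤ t → (2*t < l.length → l.getD (2*t) 0 < l.getD (2*t-1) 0) ∧
                 (2*t+1 < l.length → l.getD (2*t+1) 0 ≤ l.getD (2*t) 0)
  else
    ∀ t, 1 ≤ t → (2*t-1 < l.length → l.getD (2*t-1) 0 < l.getD (2*t-2) 0) ∧
                 (2*t < l.length → l.getD (2*t) 0 ≤ l.getD (2*t-1) 0)

/-- The vertex set of the Fibonacci tree `F_η^{(ν,μ)}`: tuples `(m_0, …, m_β)` encoded as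
lists, with entries in `[ν,μ]`, `m_0 = μ`, satisfying the chain conditions. -/
def Fset (η ν μ : ℕ) : Set (List ℕ) :=
  { l | l ≠ [] ∧ l.getD 0 0 = μ ∧ (∀ x ∈ l, ν ≤ x ∧ x ≤ μ) ∧ chainCond η l }

/-!
After its head `μ`, a vertex of `F_1` is a chain that decreases alternately strictly and weakly,
strictly first, with entries in `[ν, μ]`; a vertex of `F_2` continues with such a chain, weakly
first, with entries in `[ν, μ)`. Let `s m` and `w m` count the possibly empty such chains, strictly
and weakly first, with entries in `[ν, m)`. Splitting off the chains with head `m` gives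
`s (m+1) = s m + w m` and `w (m+1) = w m + s (m+1)`, and `s ν = w ν = 1`, so they run through
consecutive Fibonacci numbers.
-/

def AltChain : Bool → List ℕ → Prop
  | _, [] => True
  | _, [_] => True
  | b, x :: y :: l => (if b then y < x else y ≤ x) ∧ AltChain (!b) (y :: l)

theorem altChain_cons {b : Bool} {x : ℕ} {l : List ℕ} :
    AltChain b (x :: l) ↔ (∀ y ∈ l.head?, if b then y < x else y ≤ x) ∧ AltChain (!b) l := by
  cases l <;> simp [AltChain]

theorem altChain_iff_getD {b : Bool} {l : List ℕ} :
    AltChain b l ↔ ∀ i, i + 1 < l.length →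
      if (Even i ↔ b) then l.getD (i + 1) 0 < l.getD i 0 else l.getD (i + 1) 0 ≤ l.getD i 0 := by
  induction l generalizing b with
  | nil => simp [AltChain]
  | cons x l ih =>
    rw [altChain_cons, ih]
    cases l with
    | nil => simp
    | cons y l =>
      constructor
      · rintro ⟨hxy, h⟩ (_ | i) hi
        · simpa using hxy
        · have := h i (by simpa using hi)
          cases b <;> simpa [Nat.even_add_one] using this
      · intro h
        refine ⟨by simpa using h 0, fun i hi => ?_⟩
        have := h (i + 1) (by simpa using hi)
        cases b <;> simpa [Nat.even_add_one] using this

theorem forall_mem_le_of_altChain_cons {b : Bool} {x : ℕ} {l : List ℕ}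
    (h : AltChain b (x :: l)) : ∀ y ∈ l, y ≤ x := by
  induction l generalizing b x with
  | nil => simp
  | cons z l ih =>
    obtain ⟨hzx, h⟩ := h
    have hzx : z ≤ x := by split_ifs at hzx <;> omega
    simpa [hzx] using fun y hy => (ih h y hy).trans hzx

theorem chainCond_two_iff {l : List ℕ} : chainCond 2 l ↔ AltChain true l := by
  rw [altChain_iff_getD]
  simp only [chainCond, OfNat.ofNat_ne_one, if_false, iff_true]
  constructor
  · intro h i hi
    obtain ⟨k, rfl | rfl⟩ := Nat.even_or_odd' i
    · have := (h (k + 1) le_add_self).1 (by omega)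
      simpa [show 2 * (k + 1) - 1 = 2 * k + 1 by omega, show 2 * (k + 1) - 2 = 2 * k by omega]
        using this
    · have := (h (k + 1) le_add_self).2 (by omega)
      simpa [Nat.not_even_two_mul_add_one, show 2 * (k + 1) = 2 * k + 1 + 1 by omega] using this
  · intro h t ht
    obtain ⟨k, rfl⟩ := Nat.exists_eq_add_of_le' ht
    have h₀ := h (2 * k)
    have h₁ := h (2 * k + 1)
    simp only [even_two_mul, Nat.not_even_two_mul_add_one, if_true, if_false] at h₀ h₁
    refine ⟨fun hl => ?_, fun hl => ?_⟩
    · simpa [show 2 * (k + 1) - 1 = 2 * k + 1 by omega, show 2 * (k + 1) - 2 = 2 * k by omega]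
        using h₀ (by omega)
    · simpa [show 2 * (k + 1) = 2 * k + 1 + 1 by omega] using h₁ (by omega)

theorem chainCond_one_cons_iff {x : ℕ} {l : List ℕ} : chainCond 1 (x :: l) ↔ chainCond 2 l := by
  simp only [chainCond, if_true, OfNat.ofNat_ne_one, if_false]
  refine forall_congr' fun t => imp_congr_right fun ht => ?_
  obtain ⟨k, rfl⟩ := Nat.exists_eq_add_of_le' ht
  simp only [show 2 * (k + 1) = 2 * k + 1 + 1 by omega, show 2 * k + 1 + 1 - 1 = 2 * k + 1 by omega,
    show 2 * k + 1 + 1 - 2 = 2 * k by omega, List.getD_cons_succ, List.length_cons]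
  exact and_congr (imp_congr_left (by omega)) (imp_congr_left (by omega))

def altChains (ν : ℕ) (b : Bool) (m : ℕ) : Set (List ℕ) :=
  {l | AltChain b l ∧ ∀ x ∈ l, ν ≤ x ∧ x < m}

theorem cons_mem_altChains {ν m x : ℕ} {b : Bool} {l : List ℕ} :
    x :: l ∈ altChains ν b m ↔
      (ν ≤ x ∧ x < m) ∧ l ∈ altChains ν (!b) (if b then x else x + 1) := by
  simp only [altChains, Set.mem_ofPred_eq, altChain_cons, List.mem_cons, forall_eq_or_imp]
  constructor
  · rintro ⟨⟨hhead, hl⟩, hx, hmem⟩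
    refine ⟨hx, hl, fun y hy => ⟨(hmem y hy).1, ?_⟩⟩
    obtain ⟨z, l', rfl⟩ := List.exists_cons_of_ne_nil (List.ne_nil_of_mem hy)
    have hyz : y ≤ z := by
      rcases List.mem_cons.1 hy with rfl | hy
      exacts [le_rfl, forall_mem_le_of_altChain_cons hl y hy]
    have hzx := hhead z rfl
    split_ifs at hzx ⊢ <;> omega
  · rintro ⟨hx, hl, hmem⟩
    refine ⟨⟨fun y hy => ?_, hl⟩, hx, fun y hy => ⟨(hmem y hy).1, ?_⟩⟩
    · have := (hmem y (List.mem_of_mem_head? hy)).2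
      split_ifs at this ⊢ <;> omega
    · have := (hmem y hy).2
      split_ifs at this <;> omega

theorem altChains_of_le {ν m : ℕ} (b : Bool) (hm : m ≤ ν) : altChains ν b m = {[]} := by
  ext (_ | ⟨x, l⟩)
  · simp [altChains, AltChain]
  · simp only [cons_mem_altChains, Set.mem_singleton_iff, reduceCtorEq, iff_false]
    omega

theorem altChains_succ {ν m : ℕ} (b : Bool) (hm : ν ≤ m) :
    altChains ν b (m + 1) =
      altChains ν b m ∪ (m :: ·) '' altChains ν (!b) (if b then m else m + 1) := by
  ext (_ | ⟨x, l⟩)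
  · simp [altChains, AltChain]
  · simp only [cons_mem_altChains, Set.mem_union, Set.mem_image, List.cons.injEq]
    constructor
    · rintro ⟨hx, hl⟩
      rcases Nat.lt_succ_iff_lt_or_eq.1 hx.2 with hxm | rfl
      exacts [Or.inl ⟨⟨hx.1, hxm⟩, hl⟩, Or.inr ⟨l, hl, rfl, rfl⟩]
    · rintro (⟨hx, hl⟩ | ⟨_, hl, rfl, rfl⟩)
      exacts [⟨⟨hx.1, by omega⟩, hl⟩, ⟨⟨hm, by omega⟩, hl⟩]

theorem altChains_finite (ν m : ℕ) : ∀ b, (altChains ν b m).Finite := by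
  induction m with
  | zero => intro b; simp [altChains_of_le b (Nat.zero_le ν)]
  | succ m ih =>
    rcases le_or_gt ν m with hm | hm
    · have htrue : (altChains ν true (m + 1)).Finite := by
        rw [altChains_succ true hm]
        exact (ih true).union ((ih false).image _)
      rintro (_ | _)
      · rw [altChains_succ false hm]
        exact (ih false).union (htrue.image _)
      · exact htrue
    · intro b
      simp [altChains_of_le b hm]

theorem ncard_altChains_succ {ν m : ℕ} (b : Bool) (hm : ν ≤ m) :
    (altChains ν b (m + 1)).ncard =
      (altChains ν b m).ncard + (altChains ν (!b) (if b then m else m + 1)).ncard := by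
  have hdisj :
      Disjoint (altChains ν b m) ((m :: ·) '' altChains ν (!b) (if b then m else m + 1)) := by
    rw [Set.disjoint_right]
    rintro _ ⟨l, _, rfl⟩ hl
    exact (cons_mem_altChains.1 hl).1.2.false
  rw [altChains_succ b hm, Set.ncard_union_eq hdisj (altChains_finite ν m b)
    ((altChains_finite ν _ _).image _), Set.ncard_image_of_injective _ List.cons_injective]

theorem ncard_altChains (ν j : ℕ) :
    (altChains ν true (ν + j)).ncard = Nat.fib (2 * j + 1) ∧
      (altChains ν false (ν + j)).ncard = Nat.fib (2 * j + 2) := by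
  induction j with
  | zero => simp [altChains_of_le _ le_rfl]
  | succ j ih =>
    have htrue : (altChains ν true (ν + (j + 1))).ncard = Nat.fib (2 * (j + 1) + 1) := by
      rw [← add_assoc, ncard_altChains_succ true le_self_add, if_pos rfl, Bool.not_true, ih.1, ih.2,
        show 2 * (j + 1) + 1 = 2 * j + 1 + 2 by ring, Nat.fib_add_two (n := 2 * j + 1)]
    refine ⟨htrue, ?_⟩
    rw [← add_assoc, ncard_altChains_succ false le_self_add, Bool.not_false, if_neg (by simp), ih.2,
      add_assoc, htrue, show 2 * (j + 1) + 1 = 2 * j + 2 + 1 by ring,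
      show 2 * (j + 1) + 2 = 2 * j + 2 + 2 by ring, Nat.fib_add_two (n := 2 * j + 2)]

theorem cons_mem_Fset {η ν μ x : ℕ} {l : List ℕ} :
    x :: l ∈ Fset η ν μ ↔ x = μ ∧ (∀ y ∈ x :: l, ν ≤ y ∧ y < μ + 1) ∧ chainCond η (x :: l) := by
  simp only [Fset, Set.mem_ofPred_eq, ne_eq, reduceCtorEq, not_false_eq_true, true_and,
    List.getD_cons_zero, Nat.lt_succ_iff]

theorem Fset_one_eq {ν μ : ℕ} (hνμ : ν ≤ μ) :
    Fset 1 ν μ = (μ :: ·) '' altChains ν true (μ + 1) := by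
  ext (_ | ⟨x, l⟩)
  · simp [Fset]
  · simp only [cons_mem_Fset, chainCond_one_cons_iff, chainCond_two_iff, Set.mem_image,
      List.cons.injEq, List.mem_cons, forall_eq_or_imp, altChains, Set.mem_ofPred_eq]
    constructor
    · rintro ⟨rfl, ⟨_, hmem⟩, hl⟩
      exact ⟨l, ⟨hl, hmem⟩, rfl, rfl⟩
    · rintro ⟨_, ⟨hl, hmem⟩, rfl, rfl⟩
      exact ⟨rfl, ⟨⟨hνμ, by omega⟩, hmem⟩, hl⟩

theorem Fset_two_eq {ν μ : ℕ} (hνμ : ν ≤ μ) : Fset 2 ν μ = (μ :: ·) '' altChains ν false μ := by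
  ext (_ | ⟨x, l⟩)
  · simp [Fset]
  · have hmem : x :: l ∈ Fset 2 ν μ ↔ x = μ ∧ x :: l ∈ altChains ν true (μ + 1) := by
      rw [cons_mem_Fset, chainCond_two_iff, altChains, Set.mem_ofPred_eq,
        and_comm (a := AltChain _ _)]
    simp only [hmem, Set.mem_image, List.cons.injEq]
    constructor
    · rintro ⟨rfl, hl⟩
      exact ⟨l, (cons_mem_altChains.1 hl).2, rfl, rfl⟩
    · rintro ⟨_, hl, rfl, rfl⟩
      exact ⟨rfl, cons_mem_altChains.2 ⟨⟨hνμ, by omega⟩, hl⟩⟩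

theorem stmt13_general (ν μ : ℕ) (hνμ : ν ≤ μ) :
    (Fset 1 ν μ).Finite ∧ (Fset 2 ν μ).Finite ∧
    (Fset 1 ν μ).ncard = Nat.fib (2*(μ - ν) + 3) ∧
    (Fset 2 ν μ).ncard = Nat.fib (2*(μ - ν) + 2) := by
  obtain ⟨d, rfl⟩ := Nat.exists_eq_add_of_le hνμ
  rw [Fset_one_eq hνμ, Fset_two_eq hνμ, Set.ncard_image_of_injective _ List.cons_injective,
    Set.ncard_image_of_injective _ List.cons_injective, Nat.add_sub_cancel_left, add_assoc,
    (ncard_altChains ν (d + 1)).1, (ncard_altChains ν d).2]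
  exact ⟨(altChains_finite _ _ _).image _, (altChains_finite _ _ _).image _, rfl, rfl⟩

/-- `F_1^{(ν,μ)}` and `F_2^{(ν,μ)}` are finite, with Fibonacci cardinalities
`Fib(2(μ-ν)+3)` and `Fib(2(μ-ν)+2)` respectively. -/
theorem stmt13 (ν μ : ℕ) (hν : 1 ≤ ν) (hνμ : ν ≤ μ) :
    (Fset 1 ν μ).Finite ∧ (Fset 2 ν μ).Finite ∧
    (Fset 1 ν μ).ncard = Nat.fib (2*(μ - ν) + 3) ∧
    (Fset 2 ν μ).ncard = Nat.fib (2*(μ - ν) + 2) :=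
  stmt13_general ν μ hνμ
end

section
/- For every integer m, the cluster variable x_m is a Laurent polynomial in x_1 and x_2 with integer coefficients, and every nonzero coefficient of this Laurent polynomial is a positive integer; i.e., x_m ∈ ℤ[x_1^{±1}, x_2^{±1}] with all coefficients nonnegative. -/
noncomputable section

/-- The field `ℚ(x₁, x₂)` of rational functions in two indeterminates over `ℚ`. -/
abbrev KF : Type := FractionRing (MvPolynomial (Fin 2) ℚ)

/-- The image of `x₁` in `ℚ(x₁,x₂)`. -/
noncomputable def x1 : KF := algebraMap (MvPolynomial (Fin 2) ℚ) KF (MvPolynomial.X 0)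

/-- The image of `x₂` in `ℚ(x₁,x₂)`. -/
noncomputable def x2 : KF := algebraMap (MvPolynomial (Fin 2) ℚ) KF (MvPolynomial.X 1)

open MvPolynomial

abbrev PP : Type := MvPolynomial (Fin 2) ℤ

noncomputable def phi : PP →+* KF :=
  (algebraMap (MvPolynomial (Fin 2) ℚ) KF).comp (MvPolynomial.map (Int.castRingHom ℚ))

lemma phi_inj : Function.Injective phi := by
  apply Function.Injective.comp (g := algebraMap (MvPolynomial (Fin 2) ℚ) KF)
  · exact IsFractionRing.injective (MvPolynomial (Fin 2) ℚ) KF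
  · exact MvPolynomial.map_injective _ Int.cast_injective

lemma phi_X (t : Fin 2) :
    phi (X t) = algebraMap (MvPolynomial (Fin 2) ℚ) KF (X t) := by
  simp [phi]

noncomputable def sNQ (u v : PP) : ℕ → PP × PP
  | 0 => (v + 1, 1)
  | k+1 => ((v+1) * (sNQ u v k).1 + u * (sNQ u v k).2,
            (sNQ u v k).1 + u * (sNQ u v k).2)

noncomputable def NN (u v : PP) (k : ℕ) : PP := (sNQ u v k).1

lemma linrec (u v : PP) (k : ℕ) :
    NN u v (k+2) = (u+v+1) * NN u v (k+1) - u*v*NN u v k := by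
  simp only [NN, sNQ]; ring

lemma Eident (u v : PP) (k : ℕ) :
    NN u v (k+2) * NN u v k = NN u v (k+1)^2 + u^(k+2) * v^(k+1) := by
  induction k with
  | zero => simp only [NN, sNQ]; ring
  | succ n ih =>
      have h1 := linrec u v n
      have h2 := linrec u v (n+1)
      linear_combination NN u v (n+1) * h2 - NN u v (n+2) * h1 + u*v*ih

def PosP (f : PP) : Prop := ∀ d : Fin 2 →₀ ℕ, 0 ≤ f.coeff d

lemma posP_add {p q : PP} (hp : PosP p) (hq : PosP q) : PosP (p + q) := by
  intro d; rw [coeff_add]; exact add_nonneg (hp d) (hq d)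

lemma posP_mul {p q : PP} (hp : PosP p) (hq : PosP q) : PosP (p * q) := by
  intro d; rw [coeff_mul]
  exact Finset.sum_nonneg fun y _ => mul_nonneg (hp _) (hq _)

lemma posP_one : PosP (1 : PP) := by
  intro d; rw [coeff_one]; split <;> norm_num

lemma posP_X (i : Fin 2) : PosP (X i : PP) := by
  intro d; rw [coeff_X']; split <;> norm_num

lemma posP_Xsq (i : Fin 2) : PosP (X i ^ 2 : PP) := by
  rw [sq]; exact posP_mul (posP_X i) (posP_X i)

lemma pos_s (u v : PP) (hu : PosP u) (hv : PosP v) (k : ℕ) :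
    PosP (sNQ u v k).1 ∧ PosP (sNQ u v k).2 := by
  induction k with
  | zero => exact ⟨posP_add hv posP_one, posP_one⟩
  | succ n ih =>
      exact ⟨posP_add (posP_mul (posP_add hv posP_one) ih.1) (posP_mul hu ih.2),
             posP_add ih.1 (posP_mul hu ih.2)⟩

lemma cc_s (i j : Fin 2) (k : ℕ) :
    1 ≤ constantCoeff ((sNQ ((X i)^2) ((X j)^2) k).1) ∧
    0 ≤ constantCoeff ((sNQ ((X i)^2) ((X j)^2) k).2) := by
  induction k with
  | zero => simp [sNQ]
  | succ n ih =>
      simp only [sNQ, map_add, map_mul, map_pow, map_one, constantCoeff_X]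
      norm_num
      constructor
      · nlinarith [ih.1, ih.2]
      · nlinarith [ih.1, ih.2]

lemma NN_ne_zero (i j : Fin 2) (k : ℕ) : NN ((X i)^2) ((X j)^2) k ≠ 0 := by
  intro h
  have := (cc_s i j k).1
  rw [NN] at h
  rw [h] at this
  simp at this

lemma main_lemma (i j : Fin 2) (y : ℤ → KF)
    (hy1 : y 1 = phi (X i)) (hy2 : y 2 = phi (X j))
    (hrec : ∀ m : ℤ, y (m - 1) * y (m + 1) = (y m)^2 + 1) :
    ∀ k : ℕ, y ((k : ℤ) + 3) * phi (X i) ^ (k+1) * phi (X j) ^ k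
      = phi (NN ((X i)^2) ((X j)^2) k) := by
  set u : PP := (X i)^2
  set v : PP := (X j)^2
  have hXj : phi (X j) ≠ 0 := fun h => X_ne_zero j (phi_inj (by simpa using h))
  -- base 0 : y 3 * phi(X i) = phi(X j)^2 + 1
  have base0' : y 3 * phi (X i) = phi (X j) ^ 2 + 1 := by
    have h := hrec 2
    norm_num at h
    rw [hy1] at h
    linear_combination h + (y 2 + phi (X j)) * hy2
  have base0 : y ((0 : ℕ) + 3 : ℤ) * phi (X i) ^ 1 * phi (X j) ^ 0 = phi (NN u v 0) := by
    have : phi (NN u v 0) = phi (X j) ^ 2 + 1 := by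
      simp only [NN, sNQ, v, map_add, map_pow, map_one]
    norm_num
    rw [this, base0']
  have base1 : y ((1 : ℕ) + 3 : ℤ) * phi (X i) ^ (1+1) * phi (X j) ^ 1 = phi (NN u v 1) := by
    have h := hrec 3
    norm_num at h ⊢
    rw [hy2] at h
    have hN : phi (NN u v 1) = (phi (X j)^2 + 1)^2 + phi (X i)^2 := by
      simp only [NN, sNQ, u, v, map_add, map_mul, map_pow, map_one]; ring
    rw [hN]
    linear_combination phi (X i)^2 * h + (y 3 * phi (X i) + phi (X j)^2 + 1) * base0'
  have key : ∀ k : ℕ,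
      (y ((k : ℤ) + 3) * phi (X i) ^ (k+1) * phi (X j) ^ k = phi (NN u v k)) ∧
      (y (((k+1 : ℕ) : ℤ) + 3) * phi (X i) ^ (k+2) * phi (X j) ^ (k+1) = phi (NN u v (k+1))) := by
    intro k
    induction k with
    | zero => exact ⟨by exact_mod_cast base0, by exact_mod_cast base1⟩
    | succ n ih =>
        refine ⟨ih.2, ?_⟩
        have IH1 := ih.1
        have IH2 := ih.2
        have h := hrec ((n : ℤ) + 4)
        have e1 : ((n : ℤ) + 4) - 1 = (n : ℤ) + 3 := by ring
        have e2 : ((n : ℤ) + 4) + 1 = (n : ℤ) + 5 := by ring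
        rw [e1, e2] at h
        have e3 : (((n+1 : ℕ) : ℤ) + 3) = (n : ℤ) + 4 := by push_cast; ring
        rw [e3] at IH2
        have e4 : (((n+1+1 : ℕ) : ℤ) + 3) = (n : ℤ) + 5 := by push_cast; ring
        rw [e4]
        -- cancel phi (NN u v n)
        apply mul_left_cancel₀ (a := phi (NN u v n)) (by
          exact fun hz => NN_ne_zero i j n (phi_inj (by simpa using hz)))
        have lhs :
            phi (NN u v n) * (y ((n:ℤ)+5) * phi (X i) ^ (n+1+2) * phi (X j) ^ (n+1+1))
            = (y ((n:ℤ)+3) * y ((n:ℤ)+5)) * (phi (X i) ^ (2*n+4) * phi (X j) ^ (2*n+2)) := by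
          rw [← IH1]; ring
        rw [lhs, h]
        have rhs :
            (y ((n:ℤ)+4) ^ 2 + 1) * (phi (X i) ^ (2*n+4) * phi (X j) ^ (2*n+2))
            = phi (NN u v (n+1)) ^ 2 + phi (X i) ^ (2*n+4) * phi (X j) ^ (2*n+2) := by
          rw [← IH2]; ring
        rw [rhs]
        have hE := Eident u v n
        have : phi (NN u v (n+2)) * phi (NN u v n)
            = phi (NN u v (n+1)) ^ 2 + phi (X i) ^ (2*n+4) * phi (X j) ^ (2*n+2) := by
          rw [← map_mul, hE]
          simp only [map_add, map_mul, map_pow, u, v]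
          ring
        rw [← this]; ring
  intro k; exact (key k).1


/-- every cluster variable `x_m` of the Kronecker quiver is a Laurent
polynomial in `x₁, x₂` with nonnegative integer coefficients. -/
theorem stmt15 (x : ℤ → KF) (h1 : x 1 = x1) (h2 : x 2 = x2)
    (hrec : ∀ m : ℤ, x (m - 1) * x (m + 1) = (x m)^2 + 1) :
    ∀ m : ℤ, ∃ (f : MvPolynomial (Fin 2) ℤ) (a b : ℕ),
      (∀ d : Fin 2 →₀ ℕ, 0 ≤ f.coeff d) ∧
      x m * x1 ^ a * x2 ^ b =
        algebraMap (MvPolynomial (Fin 2) ℚ) KF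
          (MvPolynomial.map (Int.castRingHom ℚ) f) := by
  have hx1 : x1 = phi (X 0) := by rw [phi_X]; rfl
  have hx2 : x2 = phi (X 1) := by rw [phi_X]; rfl
  have hphi : ∀ f : PP, algebraMap (MvPolynomial (Fin 2) ℚ) KF
      (MvPolynomial.map (Int.castRingHom ℚ) f) = phi f := fun f => rfl
  -- upward
  have up := main_lemma 0 1 x (h1.trans hx1) (h2.trans hx2) hrec
  -- downward
  have hdy1 : x (3 - 1) = phi (X 1) := by norm_num [h2, hx2]
  have hdy2 : x (3 - 2) = phi (X 0) := by norm_num [h1, hx1]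
  have hdrec : ∀ m : ℤ, x (3 - (m - 1)) * x (3 - (m + 1)) = (x (3 - m))^2 + 1 := by
    intro m
    have h := hrec (3 - m)
    have e1 : (3 - m) - 1 = 3 - (m + 1) := by ring
    have e2 : (3 - m) + 1 = 3 - (m - 1) := by ring
    rw [e1, e2] at h
    linear_combination h
  have down := main_lemma 1 0 (fun t => x (3 - t)) hdy1 hdy2 hdrec
  have posN : ∀ (i j : Fin 2) (k : ℕ),
      ∀ d : Fin 2 →₀ ℕ, 0 ≤ (NN ((X i)^2) ((X j)^2) k).coeff d := by
    intro i j k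
    exact (pos_s _ _ (posP_Xsq i) (posP_Xsq j) k).1
  intro m
  obtain ⟨n, rfl | rfl⟩ := Int.eq_nat_or_neg m
  · match n with
    | 0 =>
        refine ⟨NN ((X 1)^2) ((X 0)^2) 0, 0, 1, posN 1 0 0, ?_⟩
        have this2 : x (3 - ((0:ℕ) + 3 : ℤ)) * phi (X 1) ^ (0+1) * phi (X 0) ^ 0
            = phi (NN ((X 1)^2) ((X 0)^2) 0) := down 0
        rw [hphi, hx1, hx2]
        have e : (3 - ((0:ℕ) + 3 : ℤ)) = ((0:ℕ) : ℤ) := by norm_num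
        rw [e] at this2
        rename' this2 => this
        calc x ((0:ℕ):ℤ) * phi (X 0) ^ 0 * phi (X 1) ^ 1
            = x ((0:ℕ):ℤ) * phi (X 1) ^ (0+1) * phi (X 0) ^ 0 := by ring
          _ = phi (NN ((X 1)^2) ((X 0)^2) 0) := this
    | 1 =>
        refine ⟨X 0, 0, 0, fun d => by rw [coeff_X']; split <;> norm_num, ?_⟩
        rw [hphi]
        show x ((1:ℕ):ℤ) * x1 ^ 0 * x2 ^ 0 = phi (X 0)
        norm_num [h1, hx1]
    | 2 =>
        refine ⟨X 1, 0, 0, fun d => by rw [coeff_X']; split <;> norm_num, ?_⟩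
        rw [hphi]
        show x ((2:ℕ):ℤ) * x1 ^ 0 * x2 ^ 0 = phi (X 1)
        norm_num [h2, hx2]
    | (k+3) =>
        refine ⟨NN ((X 0)^2) ((X 1)^2) k, k+1, k, posN 0 1 k, ?_⟩
        have := up k
        rw [hphi, hx1, hx2]
        have e : ((k:ℤ) + 3) = (((k+3 : ℕ)) : ℤ) := by push_cast; ring
        rw [e] at this
        exact this
  · refine ⟨NN ((X 1)^2) ((X 0)^2) n, n, n+1, posN 1 0 n, ?_⟩
    have this2 : x (3 - ((n:ℤ) + 3)) * phi (X 1) ^ (n+1) * phi (X 0) ^ n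
        = phi (NN ((X 1)^2) ((X 0)^2) n) := down n
    rw [hphi, hx1, hx2]
    have e : (3 - ((n:ℤ) + 3)) = (-(n:ℤ)) := by ring
    rw [e] at this2
    rename' this2 => this
    calc x (-(n:ℤ)) * phi (X 0) ^ n * phi (X 1) ^ (n+1)
        = x (-(n:ℤ)) * phi (X 1) ^ (n+1) * phi (X 0) ^ n := by ring
      _ = phi (NN ((X 1)^2) ((X 0)^2) n) := this

end
end

section
/- For every integer m ≥ 3, the denominator vector of the cluster variable x_m is (m−2, m−3); that is, there exists a polynomial f ∈ ℤ[u, v] divisible by neither u nor v such that x_m = f(x_1, x_2) / (x_1^{m−2} x_2^{m−3}). -/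
noncomputable section

open MvPolynomial

/-- Numerator polynomials: `fp n` is the numerator of `x (n+3)`. -/
noncomputable def fp : ℕ → MvPolynomial (Fin 2) ℤ
  | 0 => X 1 ^ 2 + 1
  | 1 => (X 1 ^ 2 + 1) ^ 2 + X 0 ^ 2
  | (n+2) => (X 0 ^ 2 + X 1 ^ 2 + 1) * fp (n+1) - X 0 ^ 2 * X 1 ^ 2 * fp n

lemma fp_const : ∀ n, constantCoeff (fp n) = 1 := by
  intro n
  induction n using Nat.strong_induction_on with
  | _ n ih =>
    match n with
    | 0 => simp [fp]
    | 1 => simp [fp]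
    | (n+2) =>
      have i1 := ih n (by omega)
      have i2 := ih (n+1) (by omega)
      simp [fp, i1, i2]

lemma fp_key : ∀ n, fp (n+2) * fp n
    = fp (n+1) ^ 2 + X 0 ^ (2*n+4) * X 1 ^ (2*n+2) := by
  intro n
  induction n with
  | zero =>
    show fp 2 * fp 0 = fp 1 ^ 2 + X 0 ^ 4 * X 1 ^ 2
    show ((X 0 ^ 2 + X 1 ^ 2 + 1) * fp 1 - X 0 ^ 2 * X 1 ^ 2 * fp 0) * fp 0 = _
    show ((X (R := ℤ) 0 ^ 2 + X 1 ^ 2 + 1) * ((X 1 ^ 2 + 1) ^ 2 + X 0 ^ 2)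
        - X 0 ^ 2 * X 1 ^ 2 * (X 1 ^ 2 + 1)) * (X 1 ^ 2 + 1)
        = ((X 1 ^ 2 + 1) ^ 2 + X 0 ^ 2) ^ 2 + X 0 ^ 4 * X 1 ^ 2
    ring
  | succ n ih =>
    have h2 : fp (n+3) = (X 0 ^ 2 + X 1 ^ 2 + 1) * fp (n+2) - X 0 ^ 2 * X 1 ^ 2 * fp (n+1) := rfl
    have h1 : fp (n+2) = (X 0 ^ 2 + X 1 ^ 2 + 1) * fp (n+1) - X 0 ^ 2 * X 1 ^ 2 * fp n := rfl
    show fp (n+3) * fp (n+1) = fp (n+2) ^ 2 + X 0 ^ (2*(n+1)+4) * X 1 ^ (2*(n+1)+2)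
    linear_combination fp (n+1) * h2 - fp (n+2) * h1 + X 0 ^ 2 * X 1 ^ 2 * ih

/-- The canonical ring map `ℤ[u,v] → ℚ(x₁,x₂)`. -/
noncomputable def PhiKF : MvPolynomial (Fin 2) ℤ →+* KF :=
  (algebraMap (MvPolynomial (Fin 2) ℚ) KF).comp (MvPolynomial.map (Int.castRingHom ℚ))

lemma PhiKF_X0 : PhiKF (X 0) = x1 := by
  simp [PhiKF, x1]

lemma PhiKF_X1 : PhiKF (X 1) = x2 := by
  simp [PhiKF, x2]

lemma PhiKF_fp_ne (n : ℕ) : PhiKF (fp n) ≠ 0 := by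
  have hmap : MvPolynomial.map (Int.castRingHom ℚ) (fp n) ≠ 0 := by
    intro h
    have : constantCoeff (MvPolynomial.map (Int.castRingHom ℚ) (fp n)) = 0 := by
      rw [h]; simp
    rw [constantCoeff_map, fp_const n] at this
    norm_num at this
  exact fun h => hmap <| (map_eq_zero_iff _
    (IsFractionRing.injective (MvPolynomial (Fin 2) ℚ) KF)).mp h

/-- for `m ≥ 3` the denominator vector of the cluster variable `x_m` is
`(m-2, m-3)`: `x_m = f(x₁,x₂) / (x₁^{m-2} x₂^{m-3})` with `f ∈ ℤ[u,v]` divisible by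
neither `u` nor `v`. -/
theorem stmt16 (x : ℤ → KF) (h1 : x 1 = x1) (h2 : x 2 = x2)
    (hrec : ∀ m : ℤ, x (m - 1) * x (m + 1) = (x m)^2 + 1) :
    ∀ m : ℤ, 3 ≤ m → ∃ f : MvPolynomial (Fin 2) ℤ,
      ¬ (MvPolynomial.X 0 ∣ f) ∧ ¬ (MvPolynomial.X 1 ∣ f) ∧
      x m * x1 ^ (m - 2).toNat * x2 ^ (m - 3).toNat =
        algebraMap (MvPolynomial (Fin 2) ℚ) KF
          (MvPolynomial.map (Int.castRingHom ℚ) f) := by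
  -- x 3 in terms of x1, x2
  have hx3 : x1 * x 3 = x2 ^ 2 + 1 := by
    have := hrec 2
    norm_num at this
    rw [h1, h2] at this
    exact this
  -- main claim by strong induction
  have key : ∀ n : ℕ, x ((n : ℤ) + 3) * x1 ^ (n+1) * x2 ^ n = PhiKF (fp n) := by
    intro n
    induction n using Nat.strong_induction_on with
    | _ n ih =>
      match n with
      | 0 =>
        show x ((0:ℤ) + 3) * x1 ^ 1 * x2 ^ 0 = PhiKF (fp 0)
        have : PhiKF (fp 0) = x2 ^ 2 + 1 := by
          show PhiKF (X 1 ^ 2 + 1) = _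
          rw [map_add, map_pow, map_one, PhiKF_X1]
        rw [this]
        norm_num
        linear_combination hx3
      | 1 =>
        show x ((1:ℤ) + 3) * x1 ^ 2 * x2 ^ 1 = PhiKF (fp 1)
        have hr : x 2 * x 4 = x 3 ^ 2 + 1 := by
          have := hrec 3; norm_num at this; exact this
        rw [h2] at hr
        have hPhi : PhiKF (fp 1) = (x2 ^ 2 + 1) ^ 2 + x1 ^ 2 := by
          show PhiKF ((X 1 ^ 2 + 1) ^ 2 + X 0 ^ 2) = _
          rw [map_add, map_pow, map_add, map_pow, map_one, map_pow, PhiKF_X0, PhiKF_X1]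
        rw [hPhi]
        norm_num
        linear_combination x1 ^ 2 * hr + (x1 * x 3 + x2 ^ 2 + 1) * hx3
      | (n+2) =>
        have hin := ih n (by omega)
        have hin1 := ih (n+1) (by omega)
        have hr := hrec ((n : ℤ) + 4)
        rw [show (n:ℤ) + 4 - 1 = (n:ℤ) + 3 by ring,
            show (n:ℤ) + 4 + 1 = (n:ℤ) + 5 by ring] at hr
        have hin1' : x ((n:ℤ) + 4) * x1 ^ (n+2) * x2 ^ (n+1) = PhiKF (fp (n+1)) := by
          rw [show ((n:ℤ)+4) = ((n+1 : ℕ) : ℤ) + 3 by push_cast; ring]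
          exact hin1
        have hk := congrArg PhiKF (fp_key n)
        rw [map_mul, map_add, map_pow, map_mul, map_pow, map_pow, PhiKF_X0, PhiKF_X1] at hk
        have harg : (((n+2 : ℕ)) : ℤ) + 3 = (n:ℤ) + 5 := by push_cast; ring
        rw [harg]
        refine mul_left_cancel₀ (PhiKF_fp_ne n) ?_
        linear_combination (-(x ((n:ℤ)+5) * x1 ^ (n+3) * x2 ^ (n+2))) * hin
          + x1 ^ (2*n+4) * x2 ^ (2*n+2) * hr
          + (x ((n:ℤ)+4) * x1 ^ (n+2) * x2 ^ (n+1) + PhiKF (fp (n+1))) * hin1'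
          - hk
  intro m hm
  obtain ⟨n, rfl⟩ : ∃ n : ℕ, m = (n : ℤ) + 3 :=
    ⟨(m - 3).toNat, by omega⟩
  refine ⟨fp n, ?_, ?_, ?_⟩
  · rintro ⟨g, hg⟩
    have := fp_const n
    rw [hg] at this
    simp at this
  · rintro ⟨g, hg⟩
    have := fp_const n
    rw [hg] at this
    simp at this
  · have e2 : ((n:ℤ) + 3 - 2).toNat = n + 1 := by omega
    have e3 : ((n:ℤ) + 3 - 3).toNat = n := by omega
    rw [e2, e3]
    exact key n

end
end
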